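/- arXiv:2010.14434 — 3 statements merged into one kernel-verified Lean document; each statement's English description precedes it below -/
import Mathlib

section
/- Let N ≥ 1 be an integer, let p > 1, and let Q : ℝ^N → ℝ be a Schwartz function solving the elliptic equation ΔQ − Q + |Q|^{p−1}Q = 0 pointwise on ℝ^N. Then ∫_{ℝ^N} |Q|^{p+1} dx = (2(p+1))/(N(p−1)) · ∫_{ℝ^N} |∇Q|² dx. -/
/-!
Test the equation against `Q` and against the dilation field `x · ∇Q`. Against `Q` it gives
`∫ |∇Q|² + ∫ Q² = ∫ |Q|^(p+1)`. Against `x · ∇Q` every term reduces to the scaling identity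
`∫ x · ∇g = -N ∫ g` for decaying `g` (integrate by parts in each coordinate), applied to `Q²`,
`|Q|^(p+1)` and, through `∂ᵢ(x · ∇Q) = ∂ᵢQ + x · ∇(∂ᵢQ)`, to `(∂ᵢQ)²`; this gives
`(N/2 - 1) ∫ |∇Q|² = -(N/2) ∫ Q² + N/(p+1) ∫ |Q|^(p+1)`. Eliminating `∫ Q²` leaves the identity.
-/

open MeasureTheory

/-- The Laplacian of `f : ℝ^N → ℝ`, as the sum of the second partial derivatives. -/
noncomputable def lap {N : ℕ} (f : EuclideanSpace ℝ (Fin N) → ℝ)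
    (x : EuclideanSpace ℝ (Fin N)) : ℝ :=
  ∑ i : Fin N,
    fderiv ℝ (fun y => fderiv ℝ f y (EuclideanSpace.single i 1)) x (EuclideanSpace.single i 1)

open scoped LineDeriv Laplacian SchwartzMap

theorem exists_bound_of_hasDerivAt {F F' : ℝ → ℝ} (hF : ∀ t, HasDerivAt F (F' t) t)
    (hF' : Continuous F') (hF0 : F 0 = 0) (M : ℝ) :
    ∃ L, ∀ t, |t| ≤ M → |F' t| ≤ L ∧ |F t| ≤ L * |t| := by
  obtain ⟨L, hL⟩ := (isCompact_Icc (a := -M) (b := M)).exists_bound_of_continuousOn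
    hF'.continuousOn
  refine ⟨L, fun t ht => ⟨hL t (abs_le.mp ht), ?_⟩⟩
  have hM : 0 ≤ M := (abs_nonneg t).trans ht
  have hMVT := (convex_Icc (-M) M).norm_image_sub_le_of_norm_hasDerivWithin_le
    (fun s _ => (hF s).hasDerivWithinAt) hL ⟨by linarith, hM⟩ (abs_le.mp ht)
  simpa [hF0] using hMVT

theorem abs_rpow_sub_one_mul_self_mul_self {p : ℝ} (hp : p + 1 ≠ 0) (t : ℝ) :
    |t| ^ (p - 1) * t * t = |t| ^ (p + 1) := by
  rw [mul_assoc, ← abs_mul_abs_self, ← sq, ← Real.rpow_two,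
    ← Real.rpow_add' (abs_nonneg t) (fun h => hp (by linarith))]
  ring_nf

theorem norm_gradient_sq_eq_sum {E ι : Type*} [NormedAddCommGroup E] [InnerProductSpace ℝ E]
    [CompleteSpace E] [Fintype ι] (b : OrthonormalBasis ι ℝ E) (f : E → ℝ) (x : E) :
    ‖gradient f x‖ ^ 2 = ∑ i, fderiv ℝ f x (b i) ^ 2 := by
  simp [← b.sum_sq_inner_left, inner_gradient_left]

section EulerIdentity

variable {E : Type*} [NormedAddCommGroup E] [NormedSpace ℝ E] [MeasurableSpace E] [BorelSpace E]
  {μ : Measure E}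

theorem MeasureTheory.Integrable.clm_mul_of_norm_mul {h : E → ℝ}
    (hxh : Integrable (fun x => ‖x‖ * h x) μ) (ℓ : E →L[ℝ] ℝ) (hh : AEStronglyMeasurable h μ) :
    Integrable (fun x => ℓ x * h x) μ := by
  refine (hxh.norm.const_mul ‖ℓ‖).mono' (ℓ.continuous.aestronglyMeasurable.mul hh)
    (ae_of_all _ fun x => ?_)
  rw [norm_mul, norm_mul, norm_norm, ← mul_assoc]
  gcongr
  exact ℓ.le_opNorm x

variable [FiniteDimensional ℝ E] [μ.IsAddHaarMeasure]

theorem integral_fderiv_apply_self {g : E → ℝ} (hg : Differentiable ℝ g)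
    (hgi : Integrable g μ) (hxg : Integrable (fun x => ‖x‖ * g x) μ)
    (hxg' : Integrable (fun x => ‖x‖ * ‖fderiv ℝ g x‖) μ) :
    ∫ x, fderiv ℝ g x x ∂μ = -(Module.finrank ℝ E) * ∫ x, g x ∂μ := by
  let b := Module.finBasis ℝ E
  let c : Fin (Module.finrank ℝ E) → E →L[ℝ] ℝ :=
    fun j => LinearMap.toContinuousLinearMap (b.coord j)
  have hdecomp : ∀ x, fderiv ℝ g x x = ∑ j, c j x * fderiv ℝ g x (b j) := fun x => by
    calc fderiv ℝ g x x = fderiv ℝ g x (∑ j, b.repr x j • b j) := by rw [b.sum_repr]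
      _ = _ := by simp only [map_sum, map_smul, smul_eq_mul]; rfl
  have hint : ∀ j, Integrable (fun x => c j x * fderiv ℝ g x (b j)) μ := fun j => by
    have hmeas := (measurable_fderiv_apply_const ℝ g (b j)).aestronglyMeasurable (μ := μ)
    refine Integrable.clm_mul_of_norm_mul ((hxg'.mul_const ‖b j‖).mono'
      (continuous_norm.aestronglyMeasurable.mul hmeas) (ae_of_all _ fun x => ?_)) (c j) hmeas
    rw [norm_mul, norm_norm, mul_assoc]
    gcongr
    exact (fderiv ℝ g x).le_opNorm (b j)
  have hcoord : ∀ j, ∫ x, c j x * fderiv ℝ g x (b j) ∂μ = -∫ x, g x ∂μ := fun j => by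
    have hcb : c j (b j) = 1 := by simp [c]
    have := integral_mul_fderiv_eq_neg_fderiv_mul_of_integrable (μ := μ) (f := c j) (g := g)
      (v := b j) ?_ (hint j) (hxg.clm_mul_of_norm_mul (c j) hgi.1)
      (fun x _ => (c j).differentiableAt) (fun x _ => hg x)
    · simpa [(c j).fderiv, hcb] using this
    · simpa [(c j).fderiv, hcb] using hgi
  simp_rw [hdecomp]
  rw [integral_finsetSum _ fun j _ => hint j]
  simp [hcoord]

end EulerIdentity

namespace SchwartzMap

section NormedSpace

variable {E : Type*} [NormedAddCommGroup E] [NormedSpace ℝ E]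

noncomputable def euler (f : 𝓢(E, ℝ)) : 𝓢(E, ℝ) :=
  bilinLeftCLM (.id ℝ (E →L[ℝ] ℝ)) Function.HasTemperateGrowth.id (fderivCLM ℝ E ℝ f)

@[simp]
theorem euler_apply (f : 𝓢(E, ℝ)) (x : E) : euler f x = fderiv ℝ f x x := rfl

theorem lineDerivOp_euler (f : 𝓢(E, ℝ)) (v : E) :
    ∂_{v} (euler f) = ∂_{v} f + euler (∂_{v} f) := by
  ext x
  have hf2 : HasFDerivAt (fderiv ℝ f) (fderiv ℝ (fderiv ℝ f) x) x :=
    ((f.smooth 2).fderiv_right (m := 1) (by norm_num)).differentiable one_ne_zero x |>.hasFDerivAt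
  have hsymm := (f.smooth 2).contDiffAt.isSymmSndFDerivAt (x := x) (by simp) v x
  have heuler : HasFDerivAt (fun y => fderiv ℝ f y y)
      (fderiv ℝ f x + (fderiv ℝ (fderiv ℝ f) x).flip x) x := by
    simpa using hf2.clm_apply (hasFDerivAt_id x)
  have hpartial : HasFDerivAt (fun y => fderiv ℝ f y v) ((fderiv ℝ (fderiv ℝ f) x).flip v) x := by
    simpa using hf2.clm_apply (hasFDerivAt_const v x)
  change fderiv ℝ (fun y => fderiv ℝ f y y) x v =
    fderiv ℝ f x v + fderiv ℝ (fun y => fderiv ℝ f y v) x x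
  rw [heuler.fderiv, hpartial.fderiv]
  simp [hsymm]

variable [FiniteDimensional ℝ E] [MeasurableSpace E] [BorelSpace E] {μ : Measure E}
  [μ.IsAddHaarMeasure]

theorem integrable_mul (f g : 𝓢(E, ℝ)) :
    Integrable (fun x => f x * g x) μ :=
  (pairing (.mul ℝ ℝ) f g).integrable

theorem integrable_comp_mul {G : ℝ → ℝ} (hG : Continuous G)
    (f g : 𝓢(E, ℝ)) : Integrable (fun x => G (f x) * g x) μ := by
  obtain ⟨C, hC⟩ := (isCompact_Icc (a := -‖f.toBoundedContinuousFunction‖)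
    (b := ‖f.toBoundedContinuousFunction‖)).exists_bound_of_continuousOn hG.continuousOn
  refine g.integrable.bdd_mul (hG.comp f.continuous).aestronglyMeasurable (c := C)
    (ae_of_all _ fun x => hC _ (abs_le.mp ?_))
  simpa using f.toBoundedContinuousFunction.norm_coe_le_norm x

theorem integral_mul_euler_of_hasDerivAt {F F' : ℝ → ℝ} (hF : ∀ t, HasDerivAt F (F' t) t)
    (hF' : Continuous F') (hF0 : F 0 = 0) (f : 𝓢(E, ℝ)) :
    ∫ x, F' (f x) * euler f x ∂μ = -(Module.finrank ℝ E) * ∫ x, F (f x) ∂μ := by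
  obtain ⟨L, hL⟩ := exists_bound_of_hasDerivAt hF hF' hF0 ‖f.toBoundedContinuousFunction‖
  have hLf : ∀ x, |F' (f x)| ≤ L ∧ |F (f x)| ≤ L * |f x| := fun x =>
    hL _ (by simpa using f.toBoundedContinuousFunction.norm_coe_le_norm x)
  have hFf : ∀ x, HasFDerivAt (fun y => F (f y)) (F' (f x) • fderiv ℝ f x) x :=
    fun x => (hF (f x)).comp_hasFDerivAt x (f.hasFDerivAt x)
  have hFc : Continuous fun x => F (f x) :=
    continuous_iff_continuousAt.2 fun x => (hFf x).continuousAt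
  have hDc : Continuous fun x => F' (f x) • fderiv ℝ f x :=
    (hF'.comp f.continuous).smul (fderivCLM ℝ E ℝ f).continuous
  have key := integral_fderiv_apply_self (μ := μ) (g := fun x => F (f x))
    (fun x => (hFf x).differentiableAt) ?_ ?_ ?_
  · simpa [(hFf _).fderiv] using key
  · refine (f.integrable.norm.const_mul L).mono' hFc.aestronglyMeasurable (ae_of_all _ fun x => ?_)
    simpa using (hLf x).2
  · refine ((f.integrable_pow_mul μ 1).const_mul L).mono'
      (continuous_norm.mul hFc).aestronglyMeasurable (ae_of_all _ fun x => ?_)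
    calc ‖‖x‖ * F (f x)‖ = ‖x‖ * |F (f x)| := by simp
      _ ≤ ‖x‖ * (L * |f x|) := by gcongr; exact (hLf x).2
      _ = L * (‖x‖ ^ 1 * ‖f x‖) := by simp only [pow_one, Real.norm_eq_abs]; ring
  · simp_rw [(hFf _).fderiv]
    refine (((fderivCLM ℝ E ℝ f).integrable_pow_mul μ 1).const_mul L).mono'
      (continuous_norm.mul hDc.norm).aestronglyMeasurable (ae_of_all _ fun x => ?_)
    calc ‖‖x‖ * ‖F' (f x) • fderiv ℝ f x‖‖ = ‖x‖ * (|F' (f x)| * ‖fderiv ℝ f x‖) := by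
          simp [norm_smul]
      _ ≤ ‖x‖ * (L * ‖fderiv ℝ f x‖) := by gcongr; exact (hLf x).1
      _ = L * (‖x‖ ^ 1 * ‖fderivCLM ℝ E ℝ f x‖) := by rw [fderivCLM_apply, pow_one]; ring

theorem integral_mul_euler_self (f : 𝓢(E, ℝ)) :
    ∫ x, f x * euler f x ∂μ = -(Module.finrank ℝ E / 2) * ∫ x, f x ^ 2 ∂μ := by
  have h := integral_mul_euler_of_hasDerivAt (μ := μ) (F := fun t => t ^ 2) (F' := fun t => 2 * t)
    (fun t => by simpa using hasDerivAt_pow 2 t) (by fun_prop) (by simp) f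
  simp only [mul_assoc, integral_const_mul] at h
  linarith

theorem integral_abs_rpow_mul_euler {p : ℝ} (hp : 1 ≤ p) (f : 𝓢(E, ℝ)) :
    ∫ x, |f x| ^ (p - 1) * f x * euler f x ∂μ
      = -(Module.finrank ℝ E / (p + 1)) * ∫ x, |f x| ^ (p + 1) ∂μ := by
  have h := integral_mul_euler_of_hasDerivAt (μ := μ) (F := fun t => |t| ^ (p + 1))
    (F' := fun t => (p + 1) * (|t| ^ (p - 1) * t))
    (fun t => by convert hasDerivAt_abs_rpow t (p := p + 1) (by linarith) using 1; ring_nf)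
    (by fun_prop (disch := linarith)) (by simpa using Real.zero_rpow (x := p + 1) (by linarith)) f
  simp only [mul_assoc, integral_const_mul] at h ⊢
  rw [← neg_div, div_mul_eq_mul_div, ← h, mul_div_cancel_left₀ _ (by linarith)]

end NormedSpace

section InnerProductSpace

variable {E ι : Type*} [NormedAddCommGroup E] [InnerProductSpace ℝ E] [FiniteDimensional ℝ E]
  [Fintype ι] [MeasurableSpace E] [BorelSpace E] {μ : Measure E} [μ.IsAddHaarMeasure]

theorem integral_laplacian_mul (b : OrthonormalBasis ι ℝ E) (f g : 𝓢(E, ℝ)) :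
    ∫ x, Δ f x * g x ∂μ = -∑ i, ∫ x, ∂_{b i} f x * ∂_{b i} g x ∂μ := by
  simp_rw [laplacian_eq_sum b, sum_apply, Finset.sum_mul]
  rw [integral_finsetSum _ fun i _ => integrable_mul _ _, ← Finset.sum_neg_distrib]
  refine Finset.sum_congr rfl fun i _ => ?_
  simpa [mul_comm] using integral_mul_lineDerivOp_right_eq_neg_left (μ := μ) g (∂_{b i} f) (b i)

theorem integral_norm_gradient_sq (b : OrthonormalBasis ι ℝ E) (f : 𝓢(E, ℝ)) :
    ∫ x, ‖gradient f x‖ ^ 2 ∂μ = ∑ i, ∫ x, ∂_{b i} f x ^ 2 ∂μ := by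
  simp_rw [norm_gradient_sq_eq_sum b, ← lineDerivOp_apply_eq_fderiv, sq]
  exact integral_finsetSum _ fun i _ => integrable_mul _ _

theorem integral_laplacian_mul_self (f : 𝓢(E, ℝ)) :
    ∫ x, Δ f x * f x ∂μ = -∫ x, ‖gradient f x‖ ^ 2 ∂μ := by
  simp_rw [integral_laplacian_mul (stdOrthonormalBasis ℝ E),
    integral_norm_gradient_sq (stdOrthonormalBasis ℝ E), sq]

theorem integral_laplacian_mul_euler (f : 𝓢(E, ℝ)) :
    ∫ x, Δ f x * euler f x ∂μ = (Module.finrank ℝ E / 2 - 1) * ∫ x, ‖gradient f x‖ ^ 2 ∂μ := by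
  let b := stdOrthonormalBasis ℝ E
  rw [integral_laplacian_mul b, integral_norm_gradient_sq b, Finset.mul_sum,
    ← Finset.sum_neg_distrib]
  refine Finset.sum_congr rfl fun i _ => ?_
  simp_rw [lineDerivOp_euler, add_apply, mul_add]
  rw [integral_add (integrable_mul _ _) (integrable_mul _ _), integral_mul_euler_self]
  simp only [sq]
  ring

theorem pohozaev {p : ℝ} (hp : 1 ≤ p) (Q : 𝓢(E, ℝ))
    (hQ : ∀ x, Δ Q x - Q x + |Q x| ^ (p - 1) * Q x = 0) :
    2 * (p + 1) * ∫ x, ‖gradient Q x‖ ^ 2 ∂μ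
      = Module.finrank ℝ E * (p - 1) * ∫ x, |Q x| ^ (p + 1) ∂μ := by
  have hweak : ∀ g : 𝓢(E, ℝ),
      ∫ x, Δ Q x * g x ∂μ = ∫ x, Q x * g x ∂μ - ∫ x, |Q x| ^ (p - 1) * Q x * g x ∂μ := by
    intro g
    rw [← integral_sub (integrable_mul _ _)
      (integrable_comp_mul (G := fun t => |t| ^ (p - 1) * t) (by fun_prop (disch := linarith)) _ _)]
    congr with x
    linear_combination hQ x * g x
  have hmass := hweak Q
  have henergy := hweak (euler Q)
  simp_rw [abs_rpow_sub_one_mul_self_mul_self (by linarith : p + 1 ≠ 0),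
    integral_laplacian_mul_self, ← sq] at hmass
  rw [integral_laplacian_mul_euler, integral_mul_euler_self,
    integral_abs_rpow_mul_euler hp] at henergy
  field_simp at henergy
  linear_combination -henergy - Module.finrank ℝ E * (p + 1) * hmass

end InnerProductSpace

end SchwartzMap

theorem lap_eq_laplacian {N : ℕ} (Q : 𝓢(EuclideanSpace ℝ (Fin N), ℝ))
    (x : EuclideanSpace ℝ (Fin N)) : lap Q x = Δ Q x := by
  simp only [lap, SchwartzMap.laplacian_eq_sum (EuclideanSpace.basisFun (Fin N) ℝ),
    EuclideanSpace.basisFun_apply, sum_apply, SchwartzMap.lineDerivOp_apply_eq_fderiv]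
  rfl

/-- **First Pohozaev identity** for the ground-state equation `ΔQ - Q + |Q|^(p-1) Q = 0`:
`∫ |Q|^(p+1) = (2(p+1))/(N(p-1)) ∫ |∇Q|²`. -/
theorem pohozaev_first (N : ℕ) (hN : 1 ≤ N) (p : ℝ) (hp : 1 < p)
    (Q : SchwartzMap (EuclideanSpace ℝ (Fin N)) ℝ)
    (hQ : ∀ x, lap (⇑Q) x - Q x + |Q x| ^ (p - 1) * Q x = 0) :
    (∫ x : EuclideanSpace ℝ (Fin N), |Q x| ^ (p + 1))
      = (2 * (p + 1)) / ((N : ℝ) * (p - 1))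
        * ∫ x : EuclideanSpace ℝ (Fin N), ‖gradient (⇑Q) x‖ ^ 2 := by
  simp_rw [lap_eq_laplacian] at hQ
  have h := Q.pohozaev (μ := volume) hp.le hQ
  rw [finrank_euclideanSpace_fin] at h
  have hN' : (N : ℝ) ≠ 0 := Nat.cast_ne_zero.mpr (by omega)
  have hp' : p - 1 ≠ 0 := by linarith
  field_simp
  linear_combination -h
end

section
/- Let F : [0,∞) → ℝ be twice continuously differentiable and suppose that F(t) ≥ 0 and F''(t) < 0 for all t ≥ 0, and that there is a constant K > 0 with F'(t)² ≤ K² F(t) F''(t)² for all t ≥ 0. Then F'(t) > 0 for all t ≥ 0, and there exist constants C > 0 and c > 0 such that F'(t) ≤ C e^{−ct} for all t ≥ 0; consequently ∫_t^∞ (−F''(s)) ds ≤ C e^{−ct} for all t ≥ 0. -/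
/-!
If `F'` vanished or became negative somewhere, strict concavity would make `F` decrease at least
linearly from some point on, contradicting `F ≥ 0`; so `F' > 0`, and then the hypothesis forces
`F > 0`. Taking square roots, the hypothesis reads `F' ≤ K √F (-F'')`, that is
`(√F)' ≤ (K/2) (-F'')`, so `√F + (K/2) F'` is nonincreasing and `√F` stays below some `M`.
Hence `F'' ≤ -F' / (K M)`, and Grönwall's argument gives exponential decay of `F'`. Since `F' → 0`,
the integral of `-F''` over `(t, ∞)` is `F'(t)`.
-/

open MeasureTheory Set Filter Topology Real

lemma le_mul_sqrt_mul_neg_of_sq_le {x y z K : ℝ} (hK : 0 ≤ K) (hz : 0 ≤ z) (hy : y ≤ 0)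
    (h : x ^ 2 ≤ K ^ 2 * z * y ^ 2) : x ≤ K * √z * -y :=
  (abs_le_of_sq_le_sq' (by rwa [mul_pow, mul_pow, sq_sqrt hz, neg_sq])
    (mul_nonneg (mul_nonneg hK (sqrt_nonneg z)) (neg_nonneg.2 hy))).2

section

variable {f : ℝ → ℝ} {a : ℝ}

lemma antitoneOn_Ici_of_hasDerivAt_nonpos {f' : ℝ → ℝ}
    (hf : ∀ x ∈ Ici a, HasDerivAt f (f' x) x) (hf' : ∀ x ∈ Ioi a, f' x ≤ 0) :
    AntitoneOn f (Ici a) :=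
  antitoneOn_of_hasDerivWithinAt_nonpos (convex_Ici a)
    (fun x hx => (hf x hx).continuousAt.continuousWithinAt)
    (fun x hx => (hf x (interior_subset hx)).hasDerivWithinAt)
    (by rwa [interior_Ici])

lemma deriv_pos_of_strictAntiOn_deriv_of_forall_le (hf : Differentiable ℝ f)
    (hf' : StrictAntiOn (deriv f) (Ici a)) {m : ℝ} (hm : ∀ x ≥ a, m ≤ f x)
    {t : ℝ} (ht : a ≤ t) : 0 < deriv f t := by
  by_contra! hnonpos
  set s := t + 1
  have hs : s ∈ Ici a := by simp only [mem_Ici, s]; linarith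
  have hslope : deriv f s < 0 := (hf' ht hs (lt_add_one t)).trans_le hnonpos
  have htangent : ∀ x ≥ s, f x - f s ≤ deriv f s * (x - s) := fun x hx =>
    (convex_Ici s).image_sub_le_mul_sub_of_deriv_le hf.continuous.continuousOn
      hf.differentiableOn
      (fun y hy => hf'.antitoneOn hs (Ici_subset_Ici.2 hs.out (interior_subset hy))
        (interior_subset hy))
      s self_mem_Ici x hx hx
  set x := s + (f s - m + 1) / -deriv f s
  have hx : x ≥ s := le_add_of_nonneg_right (div_nonneg (by linarith [hm s hs]) (by linarith))
  have hdrop : deriv f s * (x - s) = -(f s - m + 1) := by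
    simp only [x, add_sub_cancel_left]
    field_simp [hslope.ne]
  linarith [htangent x hx, hm x (hs.out.trans hx)]

lemma antitoneOn_sqrt_add_mul_deriv (hf : Differentiable ℝ f) (hf' : Differentiable ℝ (deriv f))
    (hpos : ∀ x ≥ a, 0 < f x) {K : ℝ}
    (hbound : ∀ x ≥ a, deriv f x ≤ K * √(f x) * -deriv (deriv f) x) :
    AntitoneOn (fun x => √(f x) + K / 2 * deriv f x) (Ici a) := by
  refine antitoneOn_Ici_of_hasDerivAt_nonpos
    (fun x hx => ((hf x).hasDerivAt.sqrt (hpos x hx).ne').add ((hf' x).hasDerivAt.const_mul _))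
    fun x hx => ?_
  have hsqrt : 0 < √(f x) := sqrt_pos.2 (hpos x hx.out.le)
  have := hbound x hx.out.le
  rw [div_add' _ _ _ (by positivity), div_nonpos_iff]
  right
  exact ⟨by nlinarith, by positivity⟩

lemma le_mul_exp_of_deriv_le_neg_mul (hf : Differentiable ℝ f) {c : ℝ}
    (hdecay : ∀ x ≥ a, deriv f x ≤ -c * f x) {t : ℝ} (ht : a ≤ t) :
    f t ≤ f a * exp (-c * (t - a)) := by
  have hanti : AntitoneOn (fun x => f x * exp (x * c)) (Ici a) := by
    refine antitoneOn_Ici_of_hasDerivAt_nonpos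
      (fun x _ => (hf x).hasDerivAt.mul ((hasDerivAt_mul_const c).exp)) fun x hx => ?_
    have := hdecay x hx.out.le
    have := exp_pos (x * c)
    nlinarith
  have := hanti self_mem_Ici ht ht
  rw [neg_mul, mul_sub, neg_sub, exp_sub, mul_div_assoc', le_div_iff₀ (exp_pos _)]
  simpa only [mul_comm c] using this

lemma exists_pos_deriv_deriv_le_neg_mul_deriv (hf : Differentiable ℝ f)
    (hf' : Differentiable ℝ (deriv f)) (hpos : ∀ x ≥ a, 0 < f x)
    (hderiv_pos : ∀ x ≥ a, 0 < deriv f x) {K : ℝ} (hK : 0 < K)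
    (hbound : ∀ x ≥ a, deriv f x ≤ K * √(f x) * -deriv (deriv f) x) :
    ∃ c > 0, ∀ x ≥ a, deriv (deriv f) x ≤ -c * deriv f x := by
  set M := √(f a) + K / 2 * deriv f a
  have hM : 0 < M := by have := hderiv_pos a le_rfl; positivity
  have hsqrt_le : ∀ x ≥ a, √(f x) ≤ M := fun x hx => by
    have : √(f x) + K / 2 * deriv f x ≤ M :=
      antitoneOn_sqrt_add_mul_deriv hf hf' hpos hbound self_mem_Ici hx hx
    nlinarith [hderiv_pos x hx]
  refine ⟨(K * M)⁻¹, by positivity, fun x hx => ?_⟩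
  have hnonpos : deriv (deriv f) x ≤ 0 := by
    by_contra! h
    have : K * √(f x) * -deriv (deriv f) x ≤ 0 :=
      mul_nonpos_of_nonneg_of_nonpos (by positivity) (by linarith)
    linarith [hbound x hx, hderiv_pos x hx]
  have := (hbound x hx).trans <| mul_le_mul_of_nonneg_right
    (mul_le_mul_of_nonneg_left (hsqrt_le x hx) hK.le) (neg_nonneg.2 hnonpos)
  rw [neg_mul, le_neg, inv_mul_eq_div, div_le_iff₀ (by positivity)]
  linarith

lemma tendsto_zero_of_nonneg_of_le_mul_exp {C c : ℝ} (hc : 0 < c) (hnonneg : ∀ t ≥ a, 0 ≤ f t)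
    (hle : ∀ t ≥ a, f t ≤ C * exp (-c * t)) : Tendsto f atTop (𝓝 0) :=
  tendsto_of_tendsto_of_tendsto_of_le_of_le' tendsto_const_nhds
    (by simpa using (tendsto_exp_neg_atTop_nhds_zero.comp
      (tendsto_id.const_mul_atTop hc)).const_mul C)
    ((eventually_ge_atTop a).mono hnonneg) ((eventually_ge_atTop a).mono hle)

lemma integral_Ioi_neg_deriv_of_tendsto_zero (hf : Differentiable ℝ f)
    (hanti : ∀ x > a, deriv f x ≤ 0) (hlim : Tendsto f atTop (𝓝 0)) :
    ∫ x in Ioi a, -deriv f x = f a := by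
  rw [integral_neg, integral_Ioi_of_hasDerivAt_of_nonpos' (fun x _ => (hf x).hasDerivAt)
    hanti hlim, zero_sub, neg_neg]

end

/-- **ODE/virial argument**: if `F ≥ 0`, `F'' < 0` and `(F')² ≤ K² F (F'')²` on `[0,∞)`,
then `F' > 0` on `[0,∞)` and `F'` decays exponentially; consequently
`∫ₜ^∞ (-F'') ≤ C e^(-ct)`. -/
theorem virial_ode_argument (F : ℝ → ℝ) (hF : ContDiff ℝ 2 F)
    (hFpos : ∀ t ≥ (0 : ℝ), 0 ≤ F t)
    (hFconc : ∀ t ≥ (0 : ℝ), deriv (deriv F) t < 0)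
    (K : ℝ) (hK : 0 < K)
    (hCS : ∀ t ≥ (0 : ℝ), (deriv F t) ^ 2 ≤ K ^ 2 * F t * (deriv (deriv F) t) ^ 2) :
    (∀ t ≥ (0 : ℝ), 0 < deriv F t) ∧
    ∃ C > (0 : ℝ), ∃ c > (0 : ℝ),
      (∀ t ≥ (0 : ℝ), deriv F t ≤ C * Real.exp (-c * t)) ∧
      (∀ t ≥ (0 : ℝ), (∫ s in Set.Ioi t, (-(deriv (deriv F) s))) ≤ C * Real.exp (-c * t)) := by
  have hF1 : Differentiable ℝ F := hF.differentiable two_ne_zero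
  have hF2 : Differentiable ℝ (deriv F) := (hF.deriv' (n := 1)).differentiable one_ne_zero
  have hF'pos : ∀ t ≥ (0 : ℝ), 0 < deriv F t := fun t =>
    deriv_pos_of_strictAntiOn_deriv_of_forall_le hF1
      (strictAntiOn_of_deriv_neg (convex_Ici 0) hF2.continuous.continuousOn
        fun x hx => hFconc x (interior_subset hx))
      hFpos
  have hFpos' : ∀ t ≥ (0 : ℝ), 0 < F t := fun t ht => (hFpos t ht).lt_of_ne' fun hzero => by
    have := hCS t ht
    rw [hzero] at this
    nlinarith [hF'pos t ht]
  obtain ⟨c, hc, hODE⟩ := exists_pos_deriv_deriv_le_neg_mul_deriv hF1 hF2 hFpos' hF'pos hK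
    fun t ht => le_mul_sqrt_mul_neg_of_sq_le hK.le (hFpos t ht) (hFconc t ht).le (hCS t ht)
  have hdecay : ∀ t ≥ (0 : ℝ), deriv F t ≤ deriv F 0 * exp (-c * t) := fun t ht => by
    simpa only [sub_zero] using le_mul_exp_of_deriv_le_neg_mul hF2 hODE ht
  have hlim : Tendsto (deriv F) atTop (𝓝 0) :=
    tendsto_zero_of_nonneg_of_le_mul_exp hc (fun t ht => (hF'pos t ht).le) hdecay
  refine ⟨hF'pos, deriv F 0, hF'pos 0 le_rfl, c, hc, hdecay, fun t ht => ?_⟩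
  rw [integral_Ioi_neg_deriv_of_tendsto_zero hF2 (fun x hx => (hFconc x (ht.trans hx.le)).le) hlim]
  exact hdecay t ht
end

section
/- Let 1 < p ≤ 2. There exists a constant C > 0, depending only on p, such that for every real number w ≥ 0 and every h ∈ ℂ, | |w+h|^{p−1}(w+h) − w^p − ((p+1)/2) w^{p−1} h − ((p−1)/2) w^{p−1} \overline{h} | ≤ C |h|^p. -/
/-! Write `z = w + h` and `α = p - 1 ∈ (0, 1]`. The imaginary part of the remainder is
`(|z|^α - w^α) Im h`, at most `|h|^p` because `t ↦ t^α` is `α`-Hölder. The real part splits as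
`Re z (|z|^α - |Re z|^α)` plus the first-order Taylor remainder at `w` of the real odd power
`φ t = |t|^α t`. The first term is at most `|Im h|^p`: by subadditivity of `t ↦ t^α` when
`|Re z| ≤ |Im h|`, by concavity otherwise. The second is at most `p |Re h|^p` by the mean value
theorem, since `φ' t = p |t|^α` is again `α`-Hölder. -/

open Real Asymptotics Filter Topology

theorem rpow_sub_rpow_le_rpow_sub {x y α : ℝ} (hy : 0 ≤ y) (hyx : y ≤ x) (hα0 : 0 ≤ α)
    (hα1 : α ≤ 1) : x ^ α - y ^ α ≤ (x - y) ^ α := by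
  have := rpow_add_le_add_rpow (sub_nonneg.2 hyx) hy hα0 hα1
  rw [sub_add_cancel] at this
  linarith

theorem abs_rpow_sub_rpow_le {x y α : ℝ} (hx : 0 ≤ x) (hy : 0 ≤ y) (hα0 : 0 ≤ α)
    (hα1 : α ≤ 1) : |x ^ α - y ^ α| ≤ |x - y| ^ α := by
  wlog hyx : y ≤ x generalizing x y
  · rw [abs_sub_comm, abs_sub_comm x]
    exact this hy hx (le_of_not_ge hyx)
  rw [abs_of_nonneg (sub_nonneg.2 (rpow_le_rpow hy hyx hα0)), abs_of_nonneg (sub_nonneg.2 hyx)]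
  exact rpow_sub_rpow_le_rpow_sub hy hyx hα0 hα1

theorem abs_norm_rpow_sub_norm_rpow_le {E : Type*} [SeminormedAddCommGroup E] {α : ℝ}
    (hα0 : 0 ≤ α) (hα1 : α ≤ 1) (x y : E) : |‖x‖ ^ α - ‖y‖ ^ α| ≤ ‖x - y‖ ^ α :=
  (abs_rpow_sub_rpow_le (norm_nonneg x) (norm_nonneg y) hα0 hα1).trans <|
    rpow_le_rpow (abs_nonneg _) (abs_norm_sub_norm_le x y) hα0

theorem rpow_sub_rpow_le_mul_sub {x r α : ℝ} (hx : 0 < x) (hr : 0 ≤ r) (hα0 : 0 ≤ α)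
    (hα1 : α ≤ 1) : r ^ α - x ^ α ≤ α * x ^ (α - 1) * (r - x) := by
  have hbern := rpow_one_add_le_one_add_mul_self (s := r / x - 1)
    (by linarith [div_nonneg hr hx.le]) hα0 hα1
  rw [add_sub_cancel, div_rpow hr hx.le, div_le_iff₀ (rpow_pos_of_pos hx α)] at hbern
  rw [rpow_sub_one hx.ne']
  have : α * (x ^ α / x) * (r - x) = x ^ α * (α * (r / x - 1)) := by field_simp
  linarith

theorem abs_sub_sub_mul_sub_le_of_deriv_holder {f f' : ℝ → ℝ} {K α : ℝ} (hα : 0 ≤ α)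
    (hf : ∀ t, HasDerivAt f (f' t) t) (hf' : ∀ s t, |f' s - f' t| ≤ K * |s - t| ^ α) (x y : ℝ) :
    |f y - f x - f' x * (y - x)| ≤ K * |y - x| ^ (α + 1) := by
  have hK : 0 ≤ K := by simpa using (abs_nonneg _).trans (hf' 1 0)
  have hg : ∀ t ∈ Set.uIcc x y,
      HasDerivWithinAt (fun t => f t - f' x * t) (f' t - f' x) (Set.uIcc x y) t := fun t _ =>
    (((hf t).sub ((hasDerivAt_id' t).const_mul (f' x))).congr_deriv (by ring)).hasDerivWithinAt
  have hbound : ∀ t ∈ Set.uIcc x y, ‖f' t - f' x‖ ≤ K * |y - x| ^ α := fun t ht =>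
    (hf' t x).trans <| mul_le_mul_of_nonneg_left
      (rpow_le_rpow (abs_nonneg _) (Set.abs_sub_left_of_mem_uIcc ht) hα) hK
  calc |f y - f x - f' x * (y - x)| = ‖(f y - f' x * y) - (f x - f' x * x)‖ := by
        rw [Real.norm_eq_abs]; ring_nf
    _ ≤ K * |y - x| ^ α * ‖y - x‖ := (convex_uIcc x y).norm_image_sub_le_of_norm_hasDerivWithin_le
        hg hbound Set.left_mem_uIcc Set.right_mem_uIcc
    _ = K * |y - x| ^ (α + 1) := by
        rw [Real.norm_eq_abs, mul_assoc, rpow_add_one' (abs_nonneg _) (by linarith)]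

theorem hasDerivAt_abs_rpow_mul_self {α : ℝ} (hα : 0 < α) (x : ℝ) :
    HasDerivAt (fun t => |t| ^ α * t) ((α + 1) * |x| ^ α) x := by
  rcases eq_or_ne x 0 with rfl | hx
  · have hsmall : Tendsto (fun t : ℝ => |t| ^ α) (𝓝 0) (𝓝 0) := by
      simpa [zero_rpow hα.ne'] using
        ((continuous_abs.tendsto 0).rpow_const (Or.inr hα.le))
    rw [hasDerivAt_iff_isLittleO_nhds_zero]
    simpa [zero_rpow hα.ne'] using
      ((isLittleO_one_iff ℝ).2 hsmall).mul_isBigO (isBigO_refl (fun t : ℝ => t) (𝓝 0))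
  · refine (((hasDerivAt_abs hx).rpow_const (Or.inl (abs_ne_zero.2 hx))).mul
      (hasDerivAt_id x)).congr_deriv ?_
    rw [rpow_sub_one (abs_ne_zero.2 hx)]
    field_simp
    rw [id, mul_right_comm, sign_mul_self]
    ring

theorem abs_rpow_mul_self_remainder_le {α : ℝ} (hα0 : 0 < α) (hα1 : α ≤ 1) (x y : ℝ) :
    |(|y| ^ α * y) - |x| ^ α * x - (α + 1) * |x| ^ α * (y - x)| ≤ (α + 1) * |y - x| ^ (α + 1) :=
  abs_sub_sub_mul_sub_le_of_deriv_holder hα0.le (hasDerivAt_abs_rpow_mul_self hα0) (fun s t => by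
    rw [← mul_sub, abs_mul, abs_of_pos (by linarith)]
    gcongr
    simpa using abs_norm_rpow_sub_norm_rpow_le hα0.le hα1 s t) x y

theorem abs_re_mul_norm_rpow_sub_le {α : ℝ} (hα0 : 0 ≤ α) (hα1 : α ≤ 1) (z : ℂ) :
    |z.re * (‖z‖ ^ α - |z.re| ^ α)| ≤ |z.im| ^ (α + 1) := by
  set x := |z.re|
  set y := |z.im|
  set r := ‖z‖
  have hxr : x ≤ r := Complex.abs_re_le_norm z
  have hrxy : r ≤ x + y := Complex.norm_le_abs_re_add_abs_im z
  have hr2 : r ^ 2 = x ^ 2 + y ^ 2 := by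
    simp only [r, x, y, Complex.sq_norm, Complex.normSq_apply, sq_abs]
    ring
  rw [abs_mul, abs_of_nonneg (sub_nonneg.2 (rpow_le_rpow (abs_nonneg _) hxr hα0))]
  rcases le_total x y with hxy | hyx
  · calc x * (r ^ α - x ^ α) ≤ y * (r - x) ^ α :=
          mul_le_mul hxy (rpow_sub_rpow_le_rpow_sub (abs_nonneg _) hxr hα0 hα1)
            (sub_nonneg.2 (rpow_le_rpow (abs_nonneg _) hxr hα0)) (abs_nonneg _)
      _ ≤ y * y ^ α := by gcongr; linarith
      _ = y ^ (α + 1) := by rw [rpow_add_one' (abs_nonneg _) (by linarith), mul_comm]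
  rcases (abs_nonneg z.im).eq_or_lt with hy | hy
  · have hrx : r = x := by linarith
    rw [hrx, sub_self, mul_zero]
    positivity
  have hx : 0 < x := hy.trans_le hyx
  have hrx : 2 * x * (r - x) ≤ y ^ 2 := by nlinarith
  calc x * (r ^ α - x ^ α) ≤ x * (α * x ^ (α - 1) * (r - x)) :=
        mul_le_mul_of_nonneg_left (rpow_sub_rpow_le_mul_sub hx (hx.le.trans hxr) hα0 hα1) hx.le
    _ = α / 2 * x ^ (α - 1) * (2 * x * (r - x)) := by ring
    _ ≤ α / 2 * y ^ (α - 1) * y ^ 2 := by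
        have hpow : x ^ (α - 1) ≤ y ^ (α - 1) := rpow_le_rpow_of_nonpos hy hyx (by linarith)
        exact mul_le_mul (mul_le_mul_of_nonneg_left hpow (by positivity)) hrx
          (mul_nonneg (by positivity) (sub_nonneg.2 hxr)) (by positivity)
    _ ≤ y ^ (α + 1) := by
        rw [mul_assoc, ← rpow_two, ← rpow_add hy, show α - 1 + 2 = α + 1 by ring]
        exact mul_le_of_le_one_left (rpow_nonneg hy.le _) (by linarith)

theorem abs_norm_add_rpow_mul_re_sub_le {p w : ℝ} (hp1 : 1 < p) (hp2 : p ≤ 2) (hw : 0 ≤ w)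
    (h : ℂ) :
    |‖(w : ℂ) + h‖ ^ (p - 1) * (w + h.re) - w ^ p - p * w ^ (p - 1) * h.re|
      ≤ (1 + p) * ‖h‖ ^ p := by
  have hα0 : 0 < p - 1 := by linarith
  have hα1 : p - 1 ≤ 1 := by linarith
  set z : ℂ := w + h
  have hzre : z.re = w + h.re := by simp [z]
  have hzim : z.im = h.im := by simp [z]
  have hsplit : ‖z‖ ^ (p - 1) * (w + h.re) - w ^ p - p * w ^ (p - 1) * h.re
      = z.re * (‖z‖ ^ (p - 1) - |z.re| ^ (p - 1))
        + (|z.re| ^ (p - 1) * z.re - |w| ^ (p - 1) * w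
          - (p - 1 + 1) * |w| ^ (p - 1) * (z.re - w)) := by
    rw [abs_of_nonneg hw, ← rpow_add_one' hw (by linarith), sub_add_cancel, hzre]
    ring
  calc _ ≤ |z.re * (‖z‖ ^ (p - 1) - |z.re| ^ (p - 1))| + |(|z.re| ^ (p - 1) * z.re
          - |w| ^ (p - 1) * w - (p - 1 + 1) * |w| ^ (p - 1) * (z.re - w))| :=
        hsplit ▸ abs_add_le _ _
    _ ≤ |z.im| ^ (p - 1 + 1) + (p - 1 + 1) * |z.re - w| ^ (p - 1 + 1) :=
        add_le_add (abs_re_mul_norm_rpow_sub_le hα0.le hα1 z)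
          (abs_rpow_mul_self_remainder_le hα0 hα1 w z.re)
    _ ≤ ‖h‖ ^ p + p * ‖h‖ ^ p := by
        rw [sub_add_cancel, hzim, hzre, add_sub_cancel_left]
        gcongr
        · exact Complex.abs_im_le_norm h
        · exact Complex.abs_re_le_norm h
    _ = (1 + p) * ‖h‖ ^ p := by ring

theorem abs_norm_add_rpow_sub_rpow_mul_im_le {p w : ℝ} (hp1 : 1 ≤ p) (hp2 : p ≤ 2) (hw : 0 ≤ w)
    (h : ℂ) : |(‖(w : ℂ) + h‖ ^ (p - 1) - w ^ (p - 1)) * h.im| ≤ ‖h‖ ^ p :=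
  calc _ = |‖(w : ℂ) + h‖ ^ (p - 1) - ‖(w : ℂ)‖ ^ (p - 1)| * |h.im| := by
        rw [Complex.norm_of_nonneg hw, abs_mul]
    _ ≤ ‖(w : ℂ) + h - w‖ ^ (p - 1) * ‖h‖ :=
        mul_le_mul (abs_norm_rpow_sub_norm_rpow_le (by linarith) (by linarith) _ _)
          (Complex.abs_im_le_norm h) (abs_nonneg _) (by positivity)
    _ = ‖h‖ ^ p := by
        rw [add_sub_cancel_left, ← rpow_add_one' (norm_nonneg h) (by linarith), sub_add_cancel]

/-- **`p`-th power remainder bound for the linearization of the focusing nonlinearity**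
around a nonnegative real value `w`, in the low-power regime `1 < p ≤ 2`:
`| |w+h|^(p-1)(w+h) - w^p - ((p+1)/2) w^(p-1) h - ((p-1)/2) w^(p-1) h̄ | ≤ C |h|^p`. -/
theorem remainder_p_power_bound (p : ℝ) (hp1 : 1 < p) (hp2 : p ≤ 2) :
    ∃ C > (0 : ℝ), ∀ w : ℝ, 0 ≤ w → ∀ h : ℂ,
      ‖((‖(w : ℂ) + h‖ ^ (p - 1) : ℝ) : ℂ) * ((w : ℂ) + h) - ((w ^ p : ℝ) : ℂ)
          - (((p + 1) / 2 : ℝ) : ℂ) * ((w ^ (p - 1) : ℝ) : ℂ) * h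
          - (((p - 1) / 2 : ℝ) : ℂ) * ((w ^ (p - 1) : ℝ) : ℂ) * (starRingEnd ℂ) h‖
        ≤ C * ‖h‖ ^ p := by
  refine ⟨p + 2, by linarith, fun w hw h => (Complex.norm_le_abs_re_add_abs_im _).trans ?_⟩
  simp only [Complex.sub_re, Complex.sub_im, Complex.mul_re, Complex.mul_im, Complex.add_re,
    Complex.add_im, Complex.ofReal_re, Complex.ofReal_im, Complex.conj_re, Complex.conj_im,
    zero_mul, mul_zero, sub_zero, add_zero, zero_add]
  calc _ ≤ (1 + p) * ‖h‖ ^ p + ‖h‖ ^ p := add_le_add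
        ((congrArg abs (by ring)).trans_le (abs_norm_add_rpow_mul_re_sub_le hp1 hp2 hw h))
        ((congrArg abs (by ring)).trans_le (abs_norm_add_rpow_sub_rpow_mul_im_le hp1.le hp2 hw h))
    _ = (p + 2) * ‖h‖ ^ p := by ring
end
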